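/- Let j ≥ 2 and let f ∈ C[0,1] be decreasing and convex. Then B_{n,j} f ≥ B_n f ≥ f pointwise on [0,1] for all n ≥ j. -/

import Mathlib

open Set Finset

/-- Bernstein basis polynomial `p_{n,k}(x) = C(n,k) x^k (1-x)^{n-k}`. -/
noncomputable def bp (n k : ℕ) (x : ℝ) : ℝ :=
  (n.choose k : ℝ) * x ^ k * (1 - x) ^ (n - k)

/-- AKR node `t_{n,k}^j = (k(k-1)⋯(k-j+1)/(n(n-1)⋯(n-j+1)))^{1/j}`. -/
noncomputable def akrNode (n j k : ℕ) : ℝ :=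
  ((∏ i ∈ Finset.range j, ((k : ℝ) - i)) / (∏ i ∈ Finset.range j, ((n : ℝ) - i))) ^ ((j : ℝ)⁻¹)

/-- Classical Bernstein operator. -/
noncomputable def bern (n : ℕ) (f : ℝ → ℝ) (x : ℝ) : ℝ :=
  ∑ k ∈ Finset.range (n + 1), f ((k : ℝ) / n) * bp n k x

/-- Aldaz–Kounchev–Render operator. -/
noncomputable def akr (n j : ℕ) (f : ℝ → ℝ) (x : ℝ) : ℝ :=
  ∑ k ∈ Finset.range (n + 1), f (akrNode n j k) * bp n k x

/-- Bivariate tensor-product Bernstein operator. -/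
noncomputable def bern2 (n m : ℕ) (f : ℝ → ℝ → ℝ) (x y : ℝ) : ℝ :=
  ∑ i ∈ Finset.range (n + 1), ∑ k ∈ Finset.range (m + 1),
    f ((i : ℝ) / n) ((k : ℝ) / m) * bp n i x * bp m k y

/-- Bivariate tensor-product AKR operator. -/
noncomputable def akr2 (n m j : ℕ) (f : ℝ → ℝ → ℝ) (x y : ℝ) : ℝ :=
  ∑ i ∈ Finset.range (n + 1), ∑ k ∈ Finset.range (m + 1),
    f (akrNode n j i) (akrNode m j k) * bp n i x * bp m k y

/-!
The AKR node `t_{n,k}^j` is the geometric mean of the ratios `(k - i)/(n - i)`, `i < j`, each of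
which is at most `k/n`; so `t_{n,k}^j ≤ k/n`, and a decreasing `f` has `f (k/n) ≤ f (t_{n,k}^j)`.
The inequality `f ≤ B_n f` is Jensen's inequality for the probability weights `p_{n,k}(x)`,
whose barycentre `∑ (k/n) p_{n,k}(x)` is `x`.
-/

lemma bp_eq_eval_bernsteinPolynomial (n k : ℕ) (x : ℝ) :
    bp n k x = (bernsteinPolynomial ℝ n k).eval x := by
  simp [bp, bernsteinPolynomial]

lemma bp_nonneg (n k : ℕ) {x : ℝ} (hx : x ∈ Icc (0 : ℝ) 1) : 0 ≤ bp n k x := by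
  obtain ⟨hx0, hx1⟩ := hx
  have : (0 : ℝ) ≤ 1 - x := sub_nonneg.mpr hx1
  unfold bp
  positivity

lemma sum_bp (n : ℕ) (x : ℝ) : ∑ k ∈ range (n + 1), bp n k x = 1 := by
  simpa [bp_eq_eval_bernsteinPolynomial, Polynomial.eval_finsetSum] using
    congrArg (Polynomial.eval x) (bernsteinPolynomial.sum ℝ n)

lemma sum_bp_smul_div_eq {n : ℕ} (hn : n ≠ 0) (x : ℝ) :
    ∑ k ∈ range (n + 1), bp n k x • ((k : ℝ) / n) = x := by
  have hmoment : ∑ k ∈ range (n + 1), (k : ℝ) * bp n k x = n * x := by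
    simpa [bp_eq_eval_bernsteinPolynomial, Polynomial.eval_finsetSum] using
      congrArg (Polynomial.eval x) (bernsteinPolynomial.sum_smul ℝ n)
  have hnR : (n : ℝ) ≠ 0 := Nat.cast_ne_zero.mpr hn
  simp_rw [smul_eq_mul, mul_div_assoc', mul_comm (bp n _ x), ← Finset.sum_div, hmoment]
  field_simp

lemma div_mem_Icc_zero_one {k n : ℕ} (hk : k ≤ n) : (k : ℝ) / n ∈ Icc (0 : ℝ) 1 :=
  ⟨by positivity, div_le_one_of_le₀ (Nat.cast_le.mpr hk) (Nat.cast_nonneg n)⟩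

lemma sub_div_sub_le_div {k n i : ℝ} (hkn : k ≤ n) (hi : 0 ≤ i) (hin : i < n) :
    (k - i) / (n - i) ≤ k / n := by
  rw [div_le_div_iff₀ (sub_pos.mpr hin) (hi.trans_lt hin)]
  nlinarith

lemma akrNode_eq_prod_rpow (n j k : ℕ) :
    akrNode n j k = (∏ i ∈ range j, ((k : ℝ) - i) / ((n : ℝ) - i)) ^ (j : ℝ)⁻¹ := by
  rw [akrNode, Finset.prod_div_distrib]

lemma prod_sub_div_sub_mem_Icc {n j k : ℕ} (hjn : j ≤ n) (hkn : k ≤ n) :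
    ∏ i ∈ range j, ((k : ℝ) - i) / ((n : ℝ) - i) ∈ Icc 0 (((k : ℝ) / n) ^ j) := by
  rcases lt_or_ge k j with hkj | hjk
  · have hzero : ∏ i ∈ range j, ((k : ℝ) - i) / ((n : ℝ) - i) = 0 :=
      Finset.prod_eq_zero (mem_range.mpr hkj) (by simp)
    rw [hzero]
    exact ⟨le_rfl, by positivity⟩
  · have hfactor : ∀ i ∈ range j,
        0 ≤ ((k : ℝ) - i) / ((n : ℝ) - i) ∧ ((k : ℝ) - i) / ((n : ℝ) - i) ≤ (k : ℝ) / n := by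
      intro i hi
      have hij := mem_range.mp hi
      have hin : (i : ℝ) < n := Nat.cast_lt.mpr (hij.trans_le hjn)
      have hik : (i : ℝ) ≤ k := Nat.cast_le.mpr (hij.le.trans hjk)
      exact ⟨div_nonneg (sub_nonneg.mpr hik) (sub_pos.mpr hin).le,
        sub_div_sub_le_div (Nat.cast_le.mpr hkn) (Nat.cast_nonneg i) hin⟩
    refine ⟨Finset.prod_nonneg fun i hi => (hfactor i hi).1, ?_⟩
    calc ∏ i ∈ range j, ((k : ℝ) - i) / ((n : ℝ) - i)
        ≤ ∏ _i ∈ range j, (k : ℝ) / n :=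
          Finset.prod_le_prod (fun i hi => (hfactor i hi).1) (fun i hi => (hfactor i hi).2)
      _ = ((k : ℝ) / n) ^ j := by rw [Finset.prod_const, card_range]

lemma akrNode_mem_Icc {n j k : ℕ} (hj : j ≠ 0) (hjn : j ≤ n) (hkn : k ≤ n) :
    akrNode n j k ∈ Icc 0 ((k : ℝ) / n) := by
  obtain ⟨hprod_nonneg, hprod_le⟩ := prod_sub_div_sub_mem_Icc hjn hkn
  rw [akrNode_eq_prod_rpow]
  refine ⟨Real.rpow_nonneg hprod_nonneg _, ?_⟩
  calc _ ≤ (((k : ℝ) / n) ^ j) ^ (j : ℝ)⁻¹ := Real.rpow_le_rpow hprod_nonneg hprod_le (by positivity)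
    _ = (k : ℝ) / n := Real.pow_rpow_inv_natCast (by positivity) hj

lemma bern_le_akr {n j : ℕ} (hj : j ≠ 0) (hjn : j ≤ n) {f : ℝ → ℝ}
    (hanti : AntitoneOn f (Icc 0 1)) {x : ℝ} (hx : x ∈ Icc (0 : ℝ) 1) :
    bern n f x ≤ akr n j f x := by
  refine Finset.sum_le_sum fun k hk => ?_
  have hkn : k ≤ n := Nat.lt_succ_iff.mp (mem_range.mp hk)
  obtain ⟨hnode_nonneg, hnode_le⟩ := akrNode_mem_Icc hj hjn hkn
  have hdiv := div_mem_Icc_zero_one hkn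
  exact mul_le_mul_of_nonneg_right
    (hanti ⟨hnode_nonneg, hnode_le.trans hdiv.2⟩ hdiv hnode_le) (bp_nonneg n k hx)

lemma le_bern {n : ℕ} (hn : n ≠ 0) {f : ℝ → ℝ} (hconv : ConvexOn ℝ (Icc 0 1) f)
    {x : ℝ} (hx : x ∈ Icc (0 : ℝ) 1) :
    f x ≤ bern n f x := by
  calc f x = f (∑ k ∈ range (n + 1), bp n k x • ((k : ℝ) / n)) := by
        rw [sum_bp_smul_div_eq hn]
    _ ≤ ∑ k ∈ range (n + 1), bp n k x • f ((k : ℝ) / n) :=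
        hconv.map_sum_le (fun k _ => bp_nonneg n k hx) (sum_bp n x)
          fun k hk => div_mem_Icc_zero_one (Nat.lt_succ_iff.mp (mem_range.mp hk))
    _ = bern n f x := Finset.sum_congr rfl fun k _ => by rw [smul_eq_mul, mul_comm]

theorem stmt10_general (j n : ℕ) (hj : 2 ≤ j) (hn : j ≤ n) (f : ℝ → ℝ)
    (hanti : AntitoneOn f (Icc 0 1))
    (hconv : ConvexOn ℝ (Icc 0 1) f) :
    ∀ x ∈ Icc (0:ℝ) 1, bern n f x ≤ akr n j f x ∧ f x ≤ bern n f x := by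
  intro x hx
  have hj0 : j ≠ 0 := by omega
  have hn0 : n ≠ 0 := by omega
  exact ⟨bern_le_akr hj0 hn hanti hx, le_bern hn0 hconv hx⟩

theorem stmt10 (j n : ℕ) (hj : 2 ≤ j) (hn : j ≤ n) (f : ℝ → ℝ)
    (hfc : ContinuousOn f (Icc 0 1))
    (hanti : AntitoneOn f (Icc 0 1))
    (hconv : ConvexOn ℝ (Icc 0 1) f) :
    ∀ x ∈ Icc (0:ℝ) 1, bern n f x ≤ akr n j f x ∧ f x ≤ bern n f x :=
  stmt10_general j n hj hn f hanti hconv
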